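/- Let A = R(σ,f) be a simple GWA satisfying the standing hypotheses and α a root of f with multiplicity n_α. There is a short exact sequence of graded right A-modules 0 → (z−α)^{n_α}A + xA → A ⊕ A⟨−1⟩ → [σ⁻¹((z−α)^{n_α})A + yA]⟨−1⟩ → 0, and this sequence splits; hence M_α^{-n_α} = A/((z−α)^{n_α}A + xA) has projective dimension 1. -/

import Mathlib

/- The generalized Weyl algebra `A = R(σ, f)`: the quotient of the free algebra on
generators `{x, y} ∪ R` by the relations making `R → A` a `k`-algebra map together with
`xy = f`, `yx = σ⁻¹(f)`, `xr = σ(r)x`, `yr = σ⁻¹(r)y` for all `r ∈ R`. -/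

/-- Generators of the GWA: the elements of `R`, and `x`, `y`. -/
inductive GWAgen (R : Type) : Type
  | r (a : R) : GWAgen R
  | x : GWAgen R
  | y : GWAgen R

open FreeAlgebra in
/-- The defining relations of the generalized Weyl algebra `R(σ, f)`. -/
inductive GWArel (k : Type) [CommRing k] (R : Type) [CommRing R] [Algebra k R]
    (σ : R ≃ₐ[k] R) (f : R) :
    FreeAlgebra k (GWAgen R) → FreeAlgebra k (GWAgen R) → Prop
  | add (a b : R) : GWArel k R σ f (ι k (.r (a + b))) (ι k (.r a) + ι k (.r b))
  | mul (a b : R) : GWArel k R σ f (ι k (.r (a * b))) (ι k (.r a) * ι k (.r b))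
  | alg (c : k) : GWArel k R σ f (ι k (.r (algebraMap k R c))) (algebraMap k _ c)
  | xy : GWArel k R σ f (ι k .x * ι k .y) (ι k (.r f))
  | yx : GWArel k R σ f (ι k .y * ι k .x) (ι k (.r (σ.symm f)))
  | xr (a : R) : GWArel k R σ f (ι k .x * ι k (.r a)) (ι k (.r (σ a)) * ι k .x)
  | yr (a : R) : GWArel k R σ f (ι k .y * ι k (.r a)) (ι k (.r (σ.symm a)) * ι k .y)

/-- The generalized Weyl algebra `A = R(σ, f)`. -/
abbrev GWA (k : Type) [CommRing k] (R : Type) [CommRing R] [Algebra k R]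
    (σ : R ≃ₐ[k] R) (f : R) : Type :=
  RingQuot (GWArel k R σ f)

namespace GWA

variable (k : Type) [CommRing k] (R : Type) [CommRing R] [Algebra k R]
  (σ : R ≃ₐ[k] R) (f : R)

/-- The element `x` of the GWA. -/
noncomputable def X : GWA k R σ f :=
  RingQuot.mkAlgHom k (GWArel k R σ f) (FreeAlgebra.ι k .x)

/-- The element `y` of the GWA. -/
noncomputable def Y : GWA k R σ f :=
  RingQuot.mkAlgHom k (GWArel k R σ f) (FreeAlgebra.ι k .y)

/-- The image in the GWA of an element `a` of the base ring `R`. -/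
noncomputable def r (a : R) : GWA k R σ f :=
  RingQuot.mkAlgHom k (GWArel k R σ f) (FreeAlgebra.ι k (.r a))

end GWA

open Polynomial

/-- The GWA `A = k[z](σ, f)` with base ring `R = k[z]` and `σ(z) = z + 1`
(Hypothesis 2.1(1)). -/
noncomputable abbrev GWAk (k : Type) [Field k] (f : k[X]) : Type :=
  GWA k k[X] (algEquivAevalXAddC (1 : k)) f

/-- The graded right ideal `(z − α)^j A + xA` of `A`, viewed as a submodule of `A` over
the opposite ring `Aᵐᵒᵖ`. -/
noncomputable def rightIdealM (k : Type) [Field k] (f : k[X]) (α : k) (j : ℕ) :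
    Submodule (GWAk k f)ᵐᵒᵖ (GWAk k f) :=
  Submodule.span (GWAk k f)ᵐᵒᵖ
    {GWA.r k k[X] (algEquivAevalXAddC (1 : k)) f ((X - C α) ^ j),
      GWA.X k k[X] (algEquivAevalXAddC (1 : k)) f}

/-- The graded right `A`-module `M_α^{−j} = A/((z − α)^j A + xA)`. -/
noncomputable abbrev Mminus (k : Type) [Field k] (f : k[X]) (α : k) (j : ℕ) : Type :=
  GWAk k f ⧸ rightIdealM k f α j

/-- The right ideal `σ⁻¹((z−α)^{n_α})A + yA` of `A`. -/
noncomputable def rightIdealK (k : Type) [Field k] (f : k[X]) (α : k) (m : ℕ) :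
    Submodule (GWAk k f)ᵐᵒᵖ (GWAk k f) :=
  Submodule.span (GWAk k f)ᵐᵒᵖ
    {GWA.r k k[X] (algEquivAevalXAddC (1 : k)) f
        ((algEquivAevalXAddC (1 : k)).symm ((X - C α) ^ m)),
      GWA.Y k k[X] (algEquivAevalXAddC (1 : k)) f}

/-!
Every element of `A = R(σ, f)` is uniquely `∑ r(d m) * v m` with `v m = x ^ m` for `m ≥ 0` and
`v m = y ^ (-m)` for `m < 0`: uniqueness comes from the action of `A` on `⊕ₘ R eₘ`, existence from
the stability of these sums under right multiplication by the generators. If `a ∣ f`, then in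
these coordinates `u ∈ aA + xA` iff `a` divides every coefficient of nonpositive degree; so
`y u = σ⁻¹(a) v` forces `u ∈ aA + xA`, which is exactness in the middle, while left regularity of
`σ⁻¹(a)` makes `v = σ⁻¹(a)⁻¹ y w` well defined. For `f = a g` and `s a + t g = 1`, the map
`(u, v) ↦ a s u + x σ⁻¹(t) v` retracts `w ↦ (w, σ⁻¹(a)⁻¹ y w)` because
`x σ⁻¹(t) σ⁻¹(a)⁻¹ y w = t g w`; hence `aA + xA` is a summand of `A²`, so projective.
Finally `A / (aA + xA)` is not projective: a splitting of `A → A / I` yields `e ∈ I` with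
`e w = w` on `I`, and `e a = a` forces `e = 1 ∉ I`, as `a` is not a unit.
-/

instance Module.projective_mulOpposite_self (B : Type*) [Semiring B] : Module.Projective Bᵐᵒᵖ B :=
  .of_equiv' (MulOpposite.opLinearEquiv Bᵐᵒᵖ).symm

theorem Submodule.exists_mem_forall_mul_eq_of_projective_quotient {B : Type*} [Ring B]
    (I : Submodule Bᵐᵒᵖ B) [Module.Projective Bᵐᵒᵖ (B ⧸ I)] : ∃ e ∈ I, ∀ w ∈ I, e * w = w := by
  obtain ⟨h, hh⟩ := Module.projective_lifting_property I.mkQ LinearMap.id I.mkQ_surjective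
  have hmk : I.mkQ (h (I.mkQ 1)) = I.mkQ 1 := congr($hh (I.mkQ 1))
  refine ⟨1 - h (I.mkQ 1), ?_, fun w hw => ?_⟩
  · rw [← Submodule.Quotient.mk_eq_zero, Submodule.Quotient.mk_sub, ← Submodule.mkQ_apply,
      ← Submodule.mkQ_apply, hmk, sub_self]
  · have : h (I.mkQ 1) * w = h (I.mkQ w) := by
      rw [← op_smul_eq_mul, ← map_smul, ← map_smul, op_smul_eq_mul, one_mul]
    rw [sub_mul, one_mul, this, Submodule.mkQ_apply, (Submodule.Quotient.mk_eq_zero I).2 hw,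
      map_zero, sub_zero]

namespace Finsupp

variable {k M : Type*} [CommSemiring k] [AddCommMonoid M] [Module k M]

noncomputable def weightedShift (t : ℤ) (L : ℤ → M →ₗ[k] M) : (ℤ →₀ M) →ₗ[k] ℤ →₀ M :=
  lsum k fun m => (lsingle (m + t)).comp (L m)

theorem weightedShift_single (t : ℤ) (L : ℤ → M →ₗ[k] M) (m : ℤ) (p : M) :
    weightedShift t L (single m p) = single (m + t) (L m p) := by
  simp [weightedShift]

theorem weightedShift_apply (t : ℤ) (L : ℤ → M →ₗ[k] M) (d : ℤ →₀ M) (n : ℤ) :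
    weightedShift t L d n = L (n - t) (d (n - t)) := by
  induction d using Finsupp.induction_linear with
  | zero => simp
  | add d e hd he => simp [hd, he]
  | single m p =>
    rw [weightedShift_single]
    by_cases h : m = n - t
    · subst h; simp
    · rw [single_eq_of_ne (by omega), single_eq_of_ne (Ne.symm h), map_zero]

end Finsupp

namespace GWA

open Finsupp MulOpposite

variable {k R : Type} [CommRing k] [CommRing R] [Algebra k R] {σ : R ≃ₐ[k] R} {f : R}

local notation "𝒜" => GWA k R σ f
local notation "𝐫" => GWA.r k R σ f
local notation "𝐱" => GWA.X k R σ f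
local notation "𝐲" => GWA.Y k R σ f

section Relations

theorem r_add (p q : R) : 𝐫 (p + q) = 𝐫 p + 𝐫 q := by
  simpa [GWA.r] using RingQuot.mkAlgHom_rel k (GWArel.add (σ := σ) (f := f) p q)

theorem r_mul (p q : R) : 𝐫 (p * q) = 𝐫 p * 𝐫 q := by
  simpa [GWA.r] using RingQuot.mkAlgHom_rel k (GWArel.mul (σ := σ) (f := f) p q)

theorem r_algebraMap (c : k) : 𝐫 (algebraMap k R c) = algebraMap k 𝒜 c := by
  simpa [GWA.r] using RingQuot.mkAlgHom_rel k (GWArel.alg (σ := σ) (f := f) c)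

theorem r_one : 𝐫 1 = 1 := by
  simpa using r_algebraMap (σ := σ) (f := f) (1 : k)

theorem X_mul_Y : 𝐱 * 𝐲 = 𝐫 f := by
  simpa [GWA.r, GWA.X, GWA.Y] using RingQuot.mkAlgHom_rel k (GWArel.xy (σ := σ) (f := f))

theorem Y_mul_X : 𝐲 * 𝐱 = 𝐫 (σ.symm f) := by
  simpa [GWA.r, GWA.X, GWA.Y] using RingQuot.mkAlgHom_rel k (GWArel.yx (σ := σ) (f := f))

theorem X_mul_r (p : R) : 𝐱 * 𝐫 p = 𝐫 (σ p) * 𝐱 := by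
  simpa [GWA.r, GWA.X] using RingQuot.mkAlgHom_rel k (GWArel.xr (σ := σ) (f := f) p)

theorem Y_mul_r (p : R) : 𝐲 * 𝐫 p = 𝐫 (σ.symm p) * 𝐲 := by
  simpa [GWA.r, GWA.Y] using RingQuot.mkAlgHom_rel k (GWArel.yr (σ := σ) (f := f) p)

theorem X_mul_r_symm (p : R) : 𝐱 * 𝐫 (σ.symm p) = 𝐫 p * 𝐱 := by
  rw [X_mul_r, AlgEquiv.apply_symm_apply]

variable (σ f) in
noncomputable def rAlgHom : R →ₐ[k] 𝒜 where
  toFun := 𝐫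
  map_one' := r_one
  map_mul' := r_mul
  map_zero' := by simpa using r_add (σ := σ) (f := f) 0 0
  map_add' := r_add
  commutes' := r_algebraMap

theorem rAlgHom_apply (p : R) : rAlgHom σ f p = 𝐫 p := rfl

theorem zpow_apply_apply (n : ℤ) (p : R) : (σ ^ n) (σ p) = (σ ^ (n + 1)) p := by
  rw [zpow_add_one, AlgEquiv.mul_apply]

theorem zpow_apply_symm_apply (n : ℤ) (p : R) : (σ ^ n) (σ.symm p) = (σ ^ (n - 1)) p := by
  rw [zpow_sub_one, AlgEquiv.mul_apply, AlgEquiv.aut_inv]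

theorem X_pow_mul_r (n : ℕ) (p : R) : 𝐱 ^ n * 𝐫 p = 𝐫 ((σ ^ (n : ℤ)) p) * 𝐱 ^ n := by
  induction n generalizing p with
  | zero => simp
  | succ n ih =>
    rw [pow_succ, mul_assoc, X_mul_r, ← mul_assoc, ih, mul_assoc, ← pow_succ, Nat.cast_succ,
      zpow_add_one, AlgEquiv.mul_apply]

theorem Y_pow_mul_r (n : ℕ) (p : R) : 𝐲 ^ n * 𝐫 p = 𝐫 ((σ ^ (-n : ℤ)) p) * 𝐲 ^ n := by
  induction n generalizing p with
  | zero => simp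
  | succ n ih =>
    rw [pow_succ, mul_assoc, Y_mul_r, ← mul_assoc, ih, mul_assoc, ← pow_succ, Nat.cast_succ,
      neg_add, zpow_add, zpow_neg_one, AlgEquiv.mul_apply, AlgEquiv.aut_inv]

end Relations

section Monomials

variable (σ f) in
noncomputable def monomial (m : ℤ) : 𝒜 :=
  if 0 ≤ m then 𝐱 ^ m.toNat else 𝐲 ^ (-m).toNat

theorem monomial_of_nonneg {m : ℤ} (h : 0 ≤ m) : monomial σ f m = 𝐱 ^ m.toNat := if_pos h

theorem monomial_of_nonpos {m : ℤ} (h : m ≤ 0) : monomial σ f m = 𝐲 ^ (-m).toNat := by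
  rcases h.lt_or_eq with h | rfl
  · exact if_neg (not_le.mpr h)
  · simp [monomial]

@[simp] theorem monomial_zero : monomial σ f 0 = 1 := by simp [monomial]

theorem monomial_mul_r (m : ℤ) (p : R) :
    monomial σ f m * 𝐫 p = 𝐫 ((σ ^ m) p) * monomial σ f m := by
  rcases le_total 0 m with h | h
  · rw [monomial_of_nonneg h, X_pow_mul_r, Int.toNat_of_nonneg h]
  · rw [monomial_of_nonpos h, Y_pow_mul_r, Int.toNat_of_nonneg (neg_nonneg.mpr h), neg_neg]

theorem monomial_mul_X (m : ℤ) :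
    monomial σ f m * 𝐱 = 𝐫 (if 0 ≤ m then 1 else (σ ^ m) f) * monomial σ f (m + 1) := by
  rcases le_or_gt 0 m with h | h
  · rw [if_pos h, r_one, one_mul, monomial_of_nonneg h, monomial_of_nonneg (by omega),
      ← pow_succ, Int.toNat_add h zero_le_one, Int.toNat_one]
  · obtain ⟨n, rfl⟩ : ∃ n : ℕ, m = -(n + 1 : ℕ) := ⟨(-m - 1).toNat, by omega⟩
    rw [if_neg (not_le.mpr h), monomial_of_nonpos h.le, monomial_of_nonpos (by omega), neg_neg,
      Int.toNat_natCast, pow_succ, mul_assoc, Y_mul_X, Y_pow_mul_r,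
      show -(n + 1 : ℕ) + 1 = -(n : ℤ) by omega, neg_neg, Int.toNat_natCast, ← AlgEquiv.aut_inv,
      ← AlgEquiv.mul_apply, ← zpow_neg_one, ← zpow_add]
    push_cast
    ring_nf

theorem monomial_mul_Y (m : ℤ) :
    monomial σ f m * 𝐲 = 𝐫 (if m ≤ 0 then 1 else (σ ^ (m - 1)) f) * monomial σ f (m - 1) := by
  rcases le_or_gt m 0 with h | h
  · rw [if_pos h, r_one, one_mul, monomial_of_nonpos h, monomial_of_nonpos (by omega), ← pow_succ,
      show (-(m - 1)).toNat = (-m).toNat + 1 by omega]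
  · obtain ⟨n, rfl⟩ : ∃ n : ℕ, m = (n + 1 : ℕ) := ⟨(m - 1).toNat, by omega⟩
    rw [if_neg (not_le.mpr h), monomial_of_nonneg h.le, monomial_of_nonneg (by omega),
      Int.toNat_natCast, pow_succ, mul_assoc, X_mul_Y, X_pow_mul_r,
      show ((n + 1 : ℕ) : ℤ) - 1 = n by omega, Int.toNat_natCast]

theorem Y_mul_monomial (m : ℤ) :
    𝐲 * monomial σ f m = 𝐫 (if m ≤ 0 then 1 else σ.symm f) * monomial σ f (m - 1) := by
  rcases le_or_gt m 0 with h | h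
  · rw [if_pos h, r_one, one_mul, monomial_of_nonpos h, monomial_of_nonpos (by omega), ← pow_succ',
      show (-(m - 1)).toNat = (-m).toNat + 1 by omega]
  · obtain ⟨n, rfl⟩ : ∃ n : ℕ, m = (n + 1 : ℕ) := ⟨(m - 1).toNat, by omega⟩
    rw [if_neg (not_le.mpr h), monomial_of_nonneg h.le, monomial_of_nonneg (by omega),
      Int.toNat_natCast, pow_succ', ← mul_assoc, Y_mul_X,
      show ((n + 1 : ℕ) : ℤ) - 1 = n by omega, Int.toNat_natCast]

end Monomials

section Coefficients

variable (σ f) in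
noncomputable def ofCoeffs : (ℤ →₀ R) →ₗ[k] 𝒜 :=
  lsum k fun m => (LinearMap.mulRight k (monomial σ f m)).comp (rAlgHom σ f).toLinearMap

theorem ofCoeffs_single (m : ℤ) (p : R) : ofCoeffs σ f (single m p) = 𝐫 p * monomial σ f m := by
  rw [ofCoeffs, lsum_single, LinearMap.comp_apply, LinearMap.mulRight_apply,
    AlgHom.toLinearMap_apply, rAlgHom_apply]

theorem ofCoeffs_mul_eq {t : 𝒜} {s : ℤ} {L : ℤ → R →ₗ[k] R}
    (h : ∀ m p, 𝐫 p * monomial σ f m * t = 𝐫 (L m p) * monomial σ f (m + s)) (d : ℤ →₀ R) :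
    ofCoeffs σ f d * t = ofCoeffs σ f (weightedShift s L d) := by
  have : (LinearMap.mulRight k t).comp (ofCoeffs σ f) = (ofCoeffs σ f).comp (weightedShift s L) :=
    lhom_ext fun m p => by simp [ofCoeffs_single, weightedShift_single, h]
  exact LinearMap.congr_fun this d

theorem mul_ofCoeffs_eq {t : 𝒜} {s : ℤ} {L : ℤ → R →ₗ[k] R}
    (h : ∀ m p, t * (𝐫 p * monomial σ f m) = 𝐫 (L m p) * monomial σ f (m + s)) (d : ℤ →₀ R) :
    t * ofCoeffs σ f d = ofCoeffs σ f (weightedShift s L d) := by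
  have : (LinearMap.mulLeft k t).comp (ofCoeffs σ f) = (ofCoeffs σ f).comp (weightedShift s L) :=
    lhom_ext fun m p => by simp [ofCoeffs_single, weightedShift_single, h]
  exact LinearMap.congr_fun this d

theorem ofCoeffs_mul_r (q : R) (d : ℤ →₀ R) :
    ofCoeffs σ f d * 𝐫 q =
      ofCoeffs σ f (weightedShift 0 (fun m => LinearMap.mulRight k ((σ ^ m) q)) d) :=
  ofCoeffs_mul_eq (fun m p => by
    rw [mul_assoc, monomial_mul_r, ← mul_assoc, ← r_mul, add_zero, LinearMap.mulRight_apply]) d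

theorem ofCoeffs_mul_X (d : ℤ →₀ R) :
    ofCoeffs σ f d * 𝐱 = ofCoeffs σ f
      (weightedShift 1 (fun m => LinearMap.mulRight k (if 0 ≤ m then 1 else (σ ^ m) f)) d) :=
  ofCoeffs_mul_eq (fun m p => by
    rw [mul_assoc, monomial_mul_X, ← mul_assoc, ← r_mul, LinearMap.mulRight_apply]) d

theorem ofCoeffs_mul_Y (d : ℤ →₀ R) :
    ofCoeffs σ f d * 𝐲 = ofCoeffs σ f (weightedShift (-1)
      (fun m => LinearMap.mulRight k (if m ≤ 0 then 1 else (σ ^ (m - 1)) f)) d) :=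
  ofCoeffs_mul_eq (fun m p => by
    rw [mul_assoc, monomial_mul_Y, ← mul_assoc, ← r_mul, LinearMap.mulRight_apply, sub_eq_add_neg])
    d

theorem r_mul_ofCoeffs (p : R) (d : ℤ →₀ R) :
    𝐫 p * ofCoeffs σ f d = ofCoeffs σ f (weightedShift 0 (fun _ => LinearMap.mulLeft k p) d) :=
  mul_ofCoeffs_eq (fun m q => by
    rw [← mul_assoc, ← r_mul, add_zero, LinearMap.mulLeft_apply]) d

theorem Y_mul_ofCoeffs (d : ℤ →₀ R) :
    𝐲 * ofCoeffs σ f d = ofCoeffs σ f (weightedShift (-1) (fun m =>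
      (LinearMap.mulRight k (if m ≤ 0 then 1 else σ.symm f)).comp σ.symm.toLinearMap) d) :=
  mul_ofCoeffs_eq (fun m p => by
    rw [← mul_assoc, Y_mul_r, mul_assoc, Y_mul_monomial, ← mul_assoc, ← r_mul, LinearMap.comp_apply,
      LinearMap.mulRight_apply, AlgEquiv.toLinearMap_apply, sub_eq_add_neg]) d

end Coefficients

section Basis

variable (σ f) in
noncomputable def coeffRep : 𝒜 →ₐ[k] Module.End k (ℤ →₀ R) :=
  RingQuot.liftAlgHom k ⟨FreeAlgebra.lift k fun
    | .r p => weightedShift 0 fun m => LinearMap.mulLeft k ((σ ^ (-m)) p)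
    | .x => weightedShift 1 fun _ => LinearMap.id
    | .y => weightedShift (-1) fun m => LinearMap.mulLeft k ((σ ^ (-m)) f), by
  intro u v h
  induction h <;> refine lhom_ext fun m q => ?_ <;>
    simp only [map_add, map_mul, AlgHom.commutes, FreeAlgebra.lift_ι_apply, LinearMap.add_apply,
      Module.End.mul_apply, Module.algebraMap_end_apply, weightedShift_single,
      LinearMap.mulLeft_apply, LinearMap.id_apply, AlgEquiv.commutes, zpow_apply_apply,
      zpow_apply_symm_apply, ← Algebra.smul_def, smul_single,
      add_zero, add_mul, single_add]
  all_goals (congr 1 <;> ring_nf)⟩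

theorem coeffRep_r (p : R) :
    coeffRep σ f (𝐫 p) = weightedShift 0 fun m => LinearMap.mulLeft k ((σ ^ (-m)) p) := by
  rw [coeffRep, GWA.r, RingQuot.liftAlgHom_mkAlgHom_apply, FreeAlgebra.lift_ι_apply]

theorem coeffRep_X : coeffRep σ f 𝐱 = weightedShift 1 fun _ => LinearMap.id := by
  rw [coeffRep, GWA.X, RingQuot.liftAlgHom_mkAlgHom_apply, FreeAlgebra.lift_ι_apply]

theorem coeffRep_Y :
    coeffRep σ f 𝐲 = weightedShift (-1) fun m => LinearMap.mulLeft k ((σ ^ (-m)) f) := by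
  rw [coeffRep, GWA.Y, RingQuot.liftAlgHom_mkAlgHom_apply, FreeAlgebra.lift_ι_apply]

theorem coeffRep_X_pow_single_zero (n : ℕ) :
    coeffRep σ f (𝐱 ^ n) (single 0 1) = single (n : ℤ) 1 := by
  induction n with
  | zero => simp
  | succ n ih =>
    rw [pow_succ', map_mul, Module.End.mul_apply, ih, coeffRep_X, weightedShift_single,
      LinearMap.id_apply, Nat.cast_succ]

theorem exists_coeffRep_Y_pow_single_zero [IsDomain R] (hf : f ≠ 0) (n : ℕ) :
    ∃ c ≠ 0, coeffRep σ f (𝐲 ^ n) (single 0 1) = single (-n : ℤ) c := by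
  induction n with
  | zero => exact ⟨1, one_ne_zero, by simp⟩
  | succ n ih =>
    obtain ⟨c, hc, h⟩ := ih
    refine ⟨(σ ^ (n : ℤ)) f * c,
      mul_ne_zero ((map_ne_zero_iff _ (σ ^ (n : ℤ)).injective).2 hf) hc, ?_⟩
    rw [pow_succ', map_mul, Module.End.mul_apply, h, coeffRep_Y, weightedShift_single,
      LinearMap.mulLeft_apply, neg_neg, Nat.cast_succ, neg_add, ← sub_eq_add_neg]

theorem exists_coeffRep_monomial_single_zero [IsDomain R] (hf : f ≠ 0) (m : ℤ) :
    ∃ c ≠ 0, coeffRep σ f (monomial σ f m) (single 0 1) = single m c := by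
  rcases le_total 0 m with h | h
  · refine ⟨1, one_ne_zero, ?_⟩
    rw [monomial_of_nonneg h, coeffRep_X_pow_single_zero, Int.toNat_of_nonneg h]
  · rw [monomial_of_nonpos h]
    simpa [Int.toNat_of_nonneg (neg_nonneg.2 h)] using
      exists_coeffRep_Y_pow_single_zero (σ := σ) hf (-m).toNat

theorem ofCoeffs_injective [IsDomain R] (hf : f ≠ 0) : Function.Injective (ofCoeffs σ f) := by
  choose c hc0 hc using exists_coeffRep_monomial_single_zero (σ := σ) hf
  have hrep (d : ℤ →₀ R) : coeffRep σ f (ofCoeffs σ f d) (single 0 1) =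
      weightedShift 0 (fun m => (LinearMap.mulRight k (c m)).comp (σ ^ (-m)).toLinearMap) d := by
    induction d using Finsupp.induction_linear with
    | zero => simp
    | add d e hd he => simp only [map_add, LinearMap.add_apply, hd, he]
    | single m p =>
      rw [ofCoeffs_single, map_mul, Module.End.mul_apply, hc, coeffRep_r, weightedShift_single,
        weightedShift_single]
      rfl
  refine (injective_iff_map_eq_zero _).2 fun d hd => Finsupp.ext fun m => ?_
  have hm := congr($(hrep d) m)
  rw [hd, map_zero, LinearMap.zero_apply, weightedShift_apply, sub_zero] at hm
  simpa [hc0 m] using hm.symm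

variable (σ f) in
theorem mul_mem_of_mul_generators_mem (S : Submodule k 𝒜) (hr : ∀ u ∈ S, ∀ p, u * 𝐫 p ∈ S)
    (hx : ∀ u ∈ S, u * 𝐱 ∈ S) (hy : ∀ u ∈ S, u * 𝐲 ∈ S) {u : 𝒜} (hu : u ∈ S) (t : 𝒜) :
    u * t ∈ S := by
  let T : Subalgebra k 𝒜 :=
    { carrier := {t | ∀ u ∈ S, u * t ∈ S}
      mul_mem' := fun hs ht u hu => mul_assoc u _ _ ▸ ht _ (hs u hu)
      add_mem' := fun hs ht u hu => (mul_add u _ _).symm ▸ S.add_mem (hs u hu) (ht u hu)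
      algebraMap_mem' := fun c u hu => by
        rw [← r_algebraMap (σ := σ) (f := f)]
        exact hr u hu _ }
  suffices ∀ t, t ∈ T from this t u hu
  intro t
  obtain ⟨w, rfl⟩ := RingQuot.mkAlgHom_surjective k (GWArel k R σ f) t
  induction w using FreeAlgebra.induction with
  | grade0 c => rw [AlgHom.commutes]; exact T.algebraMap_mem c
  | grade1 g =>
    cases g with
    | r p => exact fun u hu => hr u hu p
    | x => exact hx
    | y => exact hy
  | mul a b ha hb => rw [map_mul]; exact T.mul_mem ha hb
  | add a b ha hb => rw [map_add]; exact T.add_mem ha hb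

theorem ofCoeffs_surjective : Function.Surjective (ofCoeffs σ f) := by
  have h1 : (1 : 𝒜) ∈ LinearMap.range (ofCoeffs σ f) :=
    ⟨single 0 1, by rw [ofCoeffs_single, r_one, monomial_zero, one_mul]⟩
  intro t
  simpa using mul_mem_of_mul_generators_mem σ f (LinearMap.range (ofCoeffs σ f))
    (fun _ ⟨d, hd⟩ q => ⟨_, hd ▸ (ofCoeffs_mul_r q d).symm⟩)
    (fun _ ⟨d, hd⟩ => ⟨_, hd ▸ (ofCoeffs_mul_X d).symm⟩)
    (fun _ ⟨d, hd⟩ => ⟨_, hd ▸ (ofCoeffs_mul_Y d).symm⟩) h1 t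

end Basis

section Regular

variable [IsDomain R]

theorem isLeftRegular_r (hf : f ≠ 0) {p : R} (hp : p ≠ 0) : IsLeftRegular (𝐫 p) := by
  refine isLeftRegular_iff_right_eq_zero_of_mul.2 fun u hu => ?_
  obtain ⟨d, rfl⟩ := ofCoeffs_surjective u
  rw [r_mul_ofCoeffs, ← map_zero (ofCoeffs σ f)] at hu
  have hd := ofCoeffs_injective hf hu
  suffices d = 0 by rw [this, map_zero]
  ext m
  simpa [weightedShift_apply, hp] using congr($hd m)

theorem isRightRegular_r (hf : f ≠ 0) {p : R} (hp : p ≠ 0) : IsRightRegular (𝐫 p) := by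
  refine isRightRegular_iff_left_eq_zero_of_mul.2 fun u hu => ?_
  obtain ⟨d, rfl⟩ := ofCoeffs_surjective u
  rw [ofCoeffs_mul_r, ← map_zero (ofCoeffs σ f)] at hu
  have hd := ofCoeffs_injective hf hu
  suffices d = 0 by rw [this, map_zero]
  ext m
  simpa [weightedShift_apply, hp] using congr($hd m)

end Regular

section Ideals

variable (σ f) in
noncomputable def xIdeal (a : R) : Submodule 𝒜ᵐᵒᵖ 𝒜 := Submodule.span 𝒜ᵐᵒᵖ {𝐫 a, 𝐱}

variable (σ f) in
noncomputable def yIdeal (b : R) : Submodule 𝒜ᵐᵒᵖ 𝒜 := Submodule.span 𝒜ᵐᵒᵖ {𝐫 b, 𝐲}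

theorem r_mem_xIdeal (a : R) : 𝐫 a ∈ xIdeal σ f a := Submodule.subset_span (.inl rfl)

theorem X_mem_xIdeal (a : R) : 𝐱 ∈ xIdeal σ f a := Submodule.subset_span (.inr rfl)

theorem r_mem_yIdeal (b : R) : 𝐫 b ∈ yIdeal σ f b := Submodule.subset_span (.inl rfl)

theorem Y_mem_yIdeal (b : R) : 𝐲 ∈ yIdeal σ f b := Submodule.subset_span (.inr rfl)

theorem ofCoeffs_mem_xIdeal {a : R} {d : ℤ →₀ R} (hd : ∀ m ≤ 0, a ∣ d m) :
    ofCoeffs σ f d ∈ xIdeal σ f a := by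
  rw [ofCoeffs, lsum_apply]
  refine Submodule.finsuppSum_mem _ _ _ _ fun m _ => ?_
  simp only [LinearMap.comp_apply, LinearMap.mulRight_apply, AlgHom.toLinearMap_apply,
    rAlgHom_apply]
  rcases le_or_gt m 0 with hm | hm
  · obtain ⟨q, hq⟩ := hd m hm
    rw [hq, r_mul, mul_assoc]
    exact (xIdeal σ f a).smul_mem (op _) (r_mem_xIdeal a)
  · obtain ⟨n, rfl⟩ : ∃ n : ℕ, m = (n + 1 : ℕ) := ⟨(m - 1).toNat, by omega⟩
    rw [monomial_of_nonneg hm.le, Int.toNat_natCast, pow_succ', ← mul_assoc,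
      ← X_mul_r_symm, mul_assoc]
    exact (xIdeal σ f a).smul_mem (op _) (X_mem_xIdeal a)

variable (k) in
def nonposDvd (a : R) : Submodule k (ℤ →₀ R) where
  carrier := {d | ∀ m ≤ 0, a ∣ d m}
  add_mem' hd he m hm := dvd_add (hd m hm) (he m hm)
  zero_mem' _ _ := dvd_zero a
  smul_mem' c _ hd m hm := by
    rw [Finsupp.coe_smul, Pi.smul_apply, Algebra.smul_def]
    exact dvd_mul_of_dvd_right (hd m hm) _

theorem dvd_of_ofCoeffs_mem_xIdeal [IsDomain R] (hf : f ≠ 0) {a : R} (haf : a ∣ f)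
    {d : ℤ →₀ R} (hd : ofCoeffs σ f d ∈ xIdeal σ f a) : ∀ m ≤ 0, a ∣ d m := by
  set S := (nonposDvd k a).map (ofCoeffs σ f)
  have hS : ∀ {s : ℤ} {L : ℤ → R →ₗ[k] R} {t : 𝒜},
      (∀ d, ofCoeffs σ f d * t = ofCoeffs σ f (weightedShift s L d)) →
      (∀ d ∈ nonposDvd k a, ∀ m ≤ 0, a ∣ L (m - s) (d (m - s))) → ∀ u ∈ S, u * t ∈ S := by
    rintro s L t ht hL _ ⟨d, hd, rfl⟩
    exact ⟨_, fun m hm => by simpa [weightedShift_apply] using hL d hd m hm, (ht d).symm⟩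
  have hmul : ∀ u ∈ S, ∀ t, u * t ∈ S := fun u hu => mul_mem_of_mul_generators_mem σ f S
    (fun u hu q => hS (ofCoeffs_mul_r q)
      (fun e he m hm => dvd_mul_of_dvd_left (he _ (by omega)) _) u hu)
    (hS ofCoeffs_mul_X fun e he m hm => dvd_mul_of_dvd_left (he _ (by omega)) _)
    (hS ofCoeffs_mul_Y fun e he m hm => by
      rw [LinearMap.mulRight_apply]
      split_ifs with h
      · exact dvd_mul_of_dvd_left (he _ h) _
      · rw [show m - -1 - 1 = 0 by omega, zpow_zero, AlgEquiv.one_apply]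
        exact dvd_mul_of_dvd_right haf _) hu
  have hle : (xIdeal σ f a : Set 𝒜) ⊆ S := fun w hw => by
    induction hw using Submodule.span_induction with
    | mem w hw =>
      rcases hw with rfl | rfl
      · refine ⟨single 0 a, fun m _ => ?_, by rw [ofCoeffs_single, monomial_zero, mul_one]⟩
        rcases eq_or_ne m 0 with rfl | h
        · simp
        · simp [h]
      · refine ⟨single 1 1, fun m hm => ?_, by
          rw [ofCoeffs_single, r_one, one_mul, monomial_of_nonneg zero_le_one, Int.toNat_one,
            pow_one]⟩
        simp [single_eq_of_ne (show m ≠ 1 by omega)]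
    | zero => exact S.zero_mem
    | add _ _ _ _ hv hw => exact S.add_mem hv hw
    | smul t w _ hw => exact hmul w hw t.unop
  obtain ⟨d', hd', he⟩ := hle hd
  exact ofCoeffs_injective hf he ▸ hd'

theorem one_notMem_xIdeal [IsDomain R] (hf : f ≠ 0) {a : R} (haf : a ∣ f) (ha : ¬IsUnit a) :
    (1 : 𝒜) ∉ xIdeal σ f a := fun h1 => by
  have h := dvd_of_ofCoeffs_mem_xIdeal (σ := σ) hf haf (d := single 0 1)
    (by rwa [ofCoeffs_single, r_one, monomial_zero, one_mul]) 0 le_rfl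
  exact ha (isUnit_of_dvd_one (by simpa using h))

theorem mem_xIdeal_of_Y_mul_eq [IsDomain R] (hf : f ≠ 0) {a : R} {u v : 𝒜}
    (h : 𝐲 * u = 𝐫 (σ.symm a) * v) : u ∈ xIdeal σ f a := by
  obtain ⟨d, rfl⟩ := ofCoeffs_surjective u
  obtain ⟨e, rfl⟩ := ofCoeffs_surjective v
  rw [Y_mul_ofCoeffs, r_mul_ofCoeffs] at h
  refine ofCoeffs_mem_xIdeal fun m hm => (map_dvd_iff σ.symm).1 ?_
  have hm' := congr($(ofCoeffs_injective hf h) (m - 1))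
  simp only [weightedShift_apply, sub_neg_eq_add, sub_add_cancel, sub_zero, LinearMap.comp_apply,
    LinearMap.mulRight_apply, LinearMap.mulLeft_apply, AlgEquiv.toLinearMap_apply, if_pos hm,
    mul_one] at hm'
  exact hm' ▸ dvd_mul_right _ _

theorem exists_r_mul_eq_Y_mul {a g : R} (hg : f = a * g) {w : 𝒜} (hw : w ∈ xIdeal σ f a) :
    ∃ v, 𝐫 (σ.symm a) * v = 𝐲 * w := by
  induction hw using Submodule.span_induction with
  | mem w hw =>
    rcases hw with rfl | rfl
    · exact ⟨𝐲, (Y_mul_r a).symm⟩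
    · exact ⟨𝐫 (σ.symm g), by rw [← r_mul, ← map_mul, ← hg, Y_mul_X]⟩
  | zero => exact ⟨0, by rw [mul_zero, mul_zero]⟩
  | add _ _ _ _ hv hw =>
    obtain ⟨v, hv⟩ := hv
    obtain ⟨v', hv'⟩ := hw
    exact ⟨v + v', by rw [mul_add, mul_add, hv, hv']⟩
  | smul t w _ hw =>
    obtain ⟨v, hv⟩ := hw
    exact ⟨v * t.unop, by rw [smul_eq_mul_unop, ← mul_assoc, ← mul_assoc, hv]⟩

end Ideals

section Maps

variable (σ f) in
noncomputable def prodToYIdeal (b : R) : 𝒜 × 𝒜 →ₗ[𝒜ᵐᵒᵖ] yIdeal σ f b :=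
  LinearMap.codRestrict _ ((LinearMap.mulLeft 𝒜ᵐᵒᵖ 𝐲).coprod (-LinearMap.mulLeft 𝒜ᵐᵒᵖ (𝐫 b)))
    fun uv => (yIdeal σ f b).add_mem ((yIdeal σ f b).smul_mem (op uv.1) (Y_mem_yIdeal b))
      ((yIdeal σ f b).neg_mem ((yIdeal σ f b).smul_mem (op uv.2) (r_mem_yIdeal b)))

theorem coe_prodToYIdeal (b : R) (uv : 𝒜 × 𝒜) :
    (prodToYIdeal σ f b uv : 𝒜) = 𝐲 * uv.1 - 𝐫 b * uv.2 :=
  (sub_eq_add_neg _ _).symm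

theorem prodToYIdeal_surjective (b : R) : Function.Surjective (prodToYIdeal σ f b) := by
  have hle : yIdeal σ f b ≤ LinearMap.range ((yIdeal σ f b).subtype ∘ₗ prodToYIdeal σ f b) := by
    refine Submodule.span_le.2 ?_
    rintro _ (rfl | rfl)
    · exact neg_mem_iff.1 ⟨(0, 1), by simp only [LinearMap.comp_apply, Submodule.subtype_apply,
        coe_prodToYIdeal, mul_zero, mul_one, zero_sub]⟩
    · exact ⟨(1, 0), by simp only [LinearMap.comp_apply, Submodule.subtype_apply, coe_prodToYIdeal,
        mul_zero, mul_one, sub_zero]⟩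
  rintro ⟨w, hw⟩
  obtain ⟨uv, huv⟩ := hle hw
  exact ⟨uv, Subtype.ext huv⟩

variable (σ f) in
noncomputable def prodToXIdeal (a s t : R) : 𝒜 × 𝒜 →ₗ[𝒜ᵐᵒᵖ] xIdeal σ f a :=
  LinearMap.codRestrict _
    ((LinearMap.mulLeft 𝒜ᵐᵒᵖ (𝐫 a * 𝐫 s)).coprod (LinearMap.mulLeft 𝒜ᵐᵒᵖ (𝐱 * 𝐫 (σ.symm t))))
    fun uv => by
      simp only [LinearMap.coprod_apply, LinearMap.mulLeft_apply, mul_assoc]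
      exact add_mem ((xIdeal σ f a).smul_mem (op _) (r_mem_xIdeal a))
        ((xIdeal σ f a).smul_mem (op _) (X_mem_xIdeal a))

end Maps

section SplitExactSequence

variable [IsDomain R] (hf : f ≠ 0) {a g : R} (ha : a ≠ 0) (hg : f = a * g)

variable (σ) in
/-- `w ↦ σ⁻¹(a)⁻¹ y w`, well defined because `r (σ⁻¹ a)` is left regular. -/
noncomputable def yDiv : xIdeal σ f a →ₗ[𝒜ᵐᵒᵖ] 𝒜 where
  toFun w := (exists_r_mul_eq_Y_mul hg w.2).choose
  map_add' w w' := isLeftRegular_r hf ((map_ne_zero_iff _ σ.symm.injective).2 ha) <| by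
    have h (w : xIdeal σ f a) := (exists_r_mul_eq_Y_mul hg w.2).choose_spec
    beta_reduce
    rw [h, mul_add, h, h, Submodule.coe_add, mul_add]
  map_smul' t w := isLeftRegular_r hf ((map_ne_zero_iff _ σ.symm.injective).2 ha) <| by
    have h (w : xIdeal σ f a) := (exists_r_mul_eq_Y_mul hg w.2).choose_spec
    beta_reduce
    rw [h, RingHom.id_apply, smul_eq_mul_unop, ← mul_assoc, h, Submodule.coe_smul,
      smul_eq_mul_unop, mul_assoc]

theorem r_mul_yDiv (w : xIdeal σ f a) : 𝐫 (σ.symm a) * yDiv σ hf ha hg w = 𝐲 * w :=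
  (exists_r_mul_eq_Y_mul hg w.2).choose_spec

variable (σ) in
noncomputable def xIdealToProd : xIdeal σ f a →ₗ[𝒜ᵐᵒᵖ] 𝒜 × 𝒜 :=
  (xIdeal σ f a).subtype.prod (yDiv σ hf ha hg)

theorem xIdealToProd_injective : Function.Injective (xIdealToProd σ hf ha hg) :=
  fun _ _ h => Subtype.ext congr(Prod.fst $h)

theorem ker_prodToYIdeal :
    LinearMap.ker (prodToYIdeal σ f (σ.symm a)) = LinearMap.range (xIdealToProd σ hf ha hg) := by
  ext ⟨u, v⟩
  rw [LinearMap.mem_ker, LinearMap.mem_range, ← Subtype.coe_inj, coe_prodToYIdeal,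
    Submodule.coe_zero, sub_eq_zero]
  constructor
  · intro h
    refine ⟨⟨u, mem_xIdeal_of_Y_mul_eq hf h⟩, Prod.ext rfl ?_⟩
    exact isLeftRegular_r hf ((map_ne_zero_iff _ σ.symm.injective).2 ha)
      ((r_mul_yDiv hf ha hg _).trans h)
  · rintro ⟨w, hw⟩
    rw [← hw]
    exact (r_mul_yDiv hf ha hg w).symm

theorem X_mul_r_mul_yDiv (t : R) (w : xIdeal σ f a) :
    𝐱 * 𝐫 (σ.symm t) * yDiv σ hf ha hg w = 𝐫 (t * g) * w := by
  refine isLeftRegular_r hf ha ?_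
  calc 𝐫 a * (𝐱 * 𝐫 (σ.symm t) * yDiv σ hf ha hg w)
      = 𝐱 * 𝐫 (σ.symm t) * (𝐫 (σ.symm a) * yDiv σ hf ha hg w) := by
        rw [← mul_assoc, ← mul_assoc, ← X_mul_r_symm, mul_assoc 𝐱, ← r_mul, mul_comm, r_mul,
          ← mul_assoc, mul_assoc]
    _ = 𝐫 t * (𝐱 * 𝐲) * w := by
        rw [r_mul_yDiv, X_mul_r_symm, ← mul_assoc, mul_assoc (𝐫 t)]
    _ = 𝐫 a * (𝐫 (t * g) * w) := by
        rw [X_mul_Y, ← r_mul, ← mul_assoc, ← r_mul, mul_left_comm, ← hg]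

theorem prodToXIdeal_comp_xIdealToProd {s t : R} (hst : s * a + t * g = 1) :
    (prodToXIdeal σ f a s t).comp (xIdealToProd σ hf ha hg) = LinearMap.id := by
  ext w
  change 𝐫 a * 𝐫 s * w + 𝐱 * 𝐫 (σ.symm t) * yDiv σ hf ha hg w = w
  rw [X_mul_r_mul_yDiv, ← r_mul, ← add_mul, ← r_add, mul_comm a, hst, r_one, one_mul]

end SplitExactSequence

section Projectivity

variable [IsDomain R]

theorem projective_xIdeal (hf : f ≠ 0) {a g : R} (ha : a ≠ 0) (hg : f = a * g)
    (hcop : IsCoprime a g) : Module.Projective 𝒜ᵐᵒᵖ (xIdeal σ f a) := by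
  obtain ⟨s, t, hst⟩ := hcop
  exact .of_split (xIdealToProd σ hf ha hg) (prodToXIdeal σ f a s t)
    (prodToXIdeal_comp_xIdealToProd hf ha hg hst)

theorem not_projective_quotient_xIdeal (hf : f ≠ 0) {a : R} (ha : a ≠ 0) (haf : a ∣ f)
    (hunit : ¬IsUnit a) : ¬Module.Projective 𝒜ᵐᵒᵖ (𝒜 ⧸ xIdeal σ f a) := fun _ => by
  obtain ⟨e, he, heI⟩ := (xIdeal σ f a).exists_mem_forall_mul_eq_of_projective_quotient
  have he1 : e = 1 := isRightRegular_r hf ha ((heI _ (r_mem_xIdeal a)).trans (one_mul _).symm)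
  exact one_notMem_xIdeal hf haf hunit (he1 ▸ he)

end Projectivity

end GWA

theorem Mminus_projective_dimension_one_general
    (k : Type) [Field k]
    (f : k[X]) (hf : f.Monic)
    (α : k) (hα : f.IsRoot α) :
    (∃ (φ : ↥(rightIdealM k f α (f.rootMultiplicity α))
          →ₗ[(GWAk k f)ᵐᵒᵖ] GWAk k f × GWAk k f)
        (ψ : GWAk k f × GWAk k f
          →ₗ[(GWAk k f)ᵐᵒᵖ] ↥(rightIdealK k f α (f.rootMultiplicity α))),
        Function.Injective φ ∧ Function.Surjective ψ ∧
          LinearMap.ker ψ = LinearMap.range φ ∧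
            ∃ ν : GWAk k f × GWAk k f
                →ₗ[(GWAk k f)ᵐᵒᵖ] ↥(rightIdealM k f α (f.rootMultiplicity α)),
              ν.comp φ = LinearMap.id) ∧
      Module.Projective (GWAk k f)ᵐᵒᵖ ↥(rightIdealM k f α (f.rootMultiplicity α)) ∧
        ¬ Module.Projective (GWAk k f)ᵐᵒᵖ (Mminus k f α (f.rootMultiplicity α)) := by
  have hf0 := hf.ne_zero
  obtain ⟨g, hg, hndvd⟩ := f.exists_eq_pow_rootMultiplicity_mul_and_not_dvd hf0 α
  have hcop : IsCoprime ((X - C α) ^ f.rootMultiplicity α) g :=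
    ((prime_X_sub_C α).coprime_iff_not_dvd.2 hndvd).pow_left
  obtain ⟨s, t, hst⟩ := hcop
  have ha : (X - C α) ^ f.rootMultiplicity α ≠ 0 := pow_ne_zero _ (X_sub_C_ne_zero α)
  have hunit : ¬IsUnit ((X - C α) ^ f.rootMultiplicity α) := by
    rw [isUnit_pow_iff ((rootMultiplicity_pos hf0).2 hα).ne']
    exact not_isUnit_X_sub_C α
  exact ⟨⟨GWA.xIdealToProd _ hf0 ha hg, GWA.prodToYIdeal _ _ _,
      GWA.xIdealToProd_injective hf0 ha hg, GWA.prodToYIdeal_surjective _,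
      GWA.ker_prodToYIdeal hf0 ha hg, GWA.prodToXIdeal _ _ _ s t,
      GWA.prodToXIdeal_comp_xIdealToProd hf0 ha hg hst⟩,
    GWA.projective_xIdeal hf0 ha hg ⟨s, t, hst⟩,
    GWA.not_projective_quotient_xIdeal hf0 ha ⟨g, hg⟩ hunit⟩

/-- For a simple GWA `A = R(σ,f)` and a root `α` of `f` of multiplicity
`n_α` there is a short exact sequence of (graded) right `A`-modules
`0 → (z−α)^{n_α}A + xA → A ⊕ A⟨−1⟩ → [σ⁻¹((z−α)^{n_α})A + yA]⟨−1⟩ → 0`, and this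
sequence splits; hence `M_α^{−n_α} = A/((z−α)^{n_α}A + xA)` has projective dimension 1,
i.e. its first syzygy is projective while `M_α^{−n_α}` itself is not projective. -/
theorem Mminus_projective_dimension_one
    (k : Type) [Field k] [IsAlgClosed k] [CharZero k]
    (f : k[X]) (hf : f.Monic)
    (hsimple : ∀ β γ : k, f.IsRoot β → f.IsRoot γ → (∃ t : ℤ, β = γ + t) → β = γ)
    (α : k) (hα : f.IsRoot α) :
    (∃ (φ : ↥(rightIdealM k f α (f.rootMultiplicity α))
          →ₗ[(GWAk k f)ᵐᵒᵖ] GWAk k f × GWAk k f)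
        (ψ : GWAk k f × GWAk k f
          →ₗ[(GWAk k f)ᵐᵒᵖ] ↥(rightIdealK k f α (f.rootMultiplicity α))),
        Function.Injective φ ∧ Function.Surjective ψ ∧
          LinearMap.ker ψ = LinearMap.range φ ∧
            ∃ ν : GWAk k f × GWAk k f
                →ₗ[(GWAk k f)ᵐᵒᵖ] ↥(rightIdealM k f α (f.rootMultiplicity α)),
              ν.comp φ = LinearMap.id) ∧
      Module.Projective (GWAk k f)ᵐᵒᵖ ↥(rightIdealM k f α (f.rootMultiplicity α)) ∧
        ¬ Module.Projective (GWAk k f)ᵐᵒᵖ (Mminus k f α (f.rootMultiplicity α)) :=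
  Mminus_projective_dimension_one_general k f hf α hα
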